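/- For every fixed live-edge subgraph G_X (each node having at most one live in-neighbor) and every fixed sign labeling Y : E_X → {−1, 0, +1}, the deterministic positive spread satisfies the difference inclusion: for all seed sets S ⊆ R ⊆ V and every v ∈ V \ R, B^+(R ∪ {v}) \ B^+(R) ⊆ B^+(S ∪ {v}) \ B^+(S). -/
import Mathlib


/-- `anc parent v k` is the `k`-fold iterated live in-neighbor of `v` in a live-edge subgraph
in which every node has at most one incoming live edge; the subgraph is encoded by
`parent : V → Option V`, where `parent v = some u` means that the live edge `(u, v)` is
present. -/
def anc {V : Type*} (parent : V → Option V) (v : V) : ℕ → Option V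
  | 0 => some v
  | k + 1 => (anc parent v k).bind parent

/-- `v` is reachable from the seed set `S` in the live-edge subgraph, i.e. `v ∈ B(S)`. -/
def reaches {V : Type*} (parent : V → Option V) (S : Finset V) (v : V) : Prop :=
  ∃ k s, anc parent v k = some s ∧ s ∈ S

/-- The distance from `v` to its nearest seed ancestor along the chain of live in-neighbors. -/
noncomputable def seedDist {V : Type*} (parent : V → Option V) (S : Finset V) (v : V) : ℕ :=
  sInf {k | ∃ s, anc parent v k = some s ∧ s ∈ S}

/-- The sign label of the `j`-th edge on the unique live path into `v`, counted backwards
from `v` (so `j = 0` is the live edge into `v` itself).  `Y u` denotes the label of the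
unique live edge into `u` (and is irrelevant when `u` has no live in-edge). -/
def labelAt {V : Type*} (parent : V → Option V) (Y : V → SignType) (v : V) (j : ℕ) :
    SignType :=
  (anc parent v j).elim 0 Y

/-- `v ∈ B^+(S)`: `v` is reachable from `S`, and on the live path from its nearest seed
ancestor either every edge label is `0`, or the last edge with a nonzero label has label
`+1`. -/
def posNode {V : Type*} (parent : V → Option V) (Y : V → SignType) (S : Finset V)
    (v : V) : Prop :=
  reaches parent S v ∧
    ((∀ j < seedDist parent S v, labelAt parent Y v j = 0) ∨
      ∃ j < seedDist parent S v, labelAt parent Y v j = SignType.pos ∧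
        ∀ i < j, labelAt parent Y v i = 0)

/-- The set `B^+(S)` of positively activated nodes. -/
def Bpos {V : Type*} (parent : V → Option V) (Y : V → SignType) (S : Finset V) : Set V :=
  {v | posNode parent Y S v}



private lemma P_mono {V : Type*} (parent : V → Option V) (Y : V → SignType) (w : V)
    {d d' : ℕ} (h : d' ≤ d)
    (hp : (∀ j < d, labelAt parent Y w j = 0) ∨
      ∃ j < d, labelAt parent Y w j = SignType.pos ∧ ∀ i < j, labelAt parent Y w i = 0) :
    (∀ j < d', labelAt parent Y w j = 0) ∨
      ∃ j < d', labelAt parent Y w j = SignType.pos ∧ ∀ i < j, labelAt parent Y w i = 0 := by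
  rcases hp with h0 | ⟨j, hj, hjp, hj0⟩
  · exact Or.inl fun j hj => h0 j (hj.trans_le h)
  · rcases lt_or_ge j d' with hlt | hle
    · exact Or.inr ⟨j, hlt, hjp, hj0⟩
    · exact Or.inl fun i hi => hj0 i (hi.trans_le hle)


private lemma seedDist_le {V : Type*} (parent : V → Option V) (T : Finset V) (w : V)
    {k : ℕ} {s : V} (h : anc parent w k = some s) (hs : s ∈ T) :
    seedDist parent T w ≤ k :=
  Nat.sInf_le ⟨s, h, hs⟩

private lemma seedDist_spec {V : Type*} (parent : V → Option V) (T : Finset V) (w : V)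
    (h : reaches parent T w) :
    ∃ s, anc parent w (seedDist parent T w) = some s ∧ s ∈ T := by
  obtain ⟨k, s, hk, hs⟩ := h
  exact Nat.sInf_mem (⟨k, s, hk, hs⟩ : {m | ∃ t, anc parent w m = some t ∧ t ∈ T}.Nonempty)

/-- for every fixed live-edge subgraph (each node having at most one live
in-neighbor) and every fixed sign labeling, the deterministic positive spread satisfies the
difference inclusion: for all seed sets `S ⊆ R ⊆ V` and `v ∉ R`,
`B^+(R ∪ {v}) \ B^+(R) ⊆ B^+(S ∪ {v}) \ B^+(S)`. -/
theorem Bpos_difference_inclusion {V : Type*} [Fintype V] [DecidableEq V]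
    (parent : V → Option V) (Y : V → SignType)
    (S R : Finset V) (hSR : S ⊆ R) (v : V) (hv : v ∉ R) :
    Bpos parent Y (insert v R) \ Bpos parent Y R ⊆
      Bpos parent Y (insert v S) \ Bpos parent Y S := by
  rintro w ⟨⟨hr1, hp1⟩, hw2⟩
  have hnotS : ¬ posNode parent Y S w := by
    rintro ⟨hrS, hpS⟩
    apply hw2
    obtain ⟨k, s, hk, hs⟩ := hrS
    refine ⟨⟨k, s, hk, hSR hs⟩, ?_⟩
    have hle : seedDist parent R w ≤ seedDist parent S w := by
      obtain ⟨s', hs', hmem⟩ := seedDist_spec parent S w ⟨k, s, hk, hs⟩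
      exact seedDist_le parent R w hs' (hSR hmem)
    exact P_mono parent Y w hle hpS
  set d1 := seedDist parent (insert v R) w with hd1
  have hmemA : ∃ s, anc parent w d1 = some s ∧ s ∈ insert v R :=
    seedDist_spec parent (insert v R) w hr1
  have hv1 : anc parent w d1 = some v := by
    obtain ⟨s, hs, hmem⟩ := hmemA
    rcases Finset.mem_insert.mp hmem with rfl | hsR
    · exact hs
    · exfalso
      apply hw2
      have hdR : seedDist parent R w = d1 := by
        apply le_antisymm (seedDist_le parent R w hs hsR)
        obtain ⟨t, ht, htR⟩ := seedDist_spec parent R w ⟨d1, s, hs, hsR⟩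
        rw [hd1]
        exact seedDist_le parent (insert v R) w ht (Finset.mem_insert_of_mem htR)
      exact ⟨⟨d1, s, hs, hsR⟩, by rw [hdR]; exact hp1⟩
  have hdS1 : seedDist parent (insert v S) w = d1 := by
    apply le_antisymm (seedDist_le parent (insert v S) w hv1 (Finset.mem_insert_self v S))
    obtain ⟨t, ht, htm⟩ :=
      seedDist_spec parent (insert v S) w ⟨d1, v, hv1, Finset.mem_insert_self v S⟩
    rw [hd1]
    refine seedDist_le parent (insert v R) w ht ?_
    rcases Finset.mem_insert.mp htm with rfl | h
    · exact Finset.mem_insert_self t R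
    · exact Finset.mem_insert_of_mem (hSR h)
  exact ⟨⟨⟨d1, v, hv1, Finset.mem_insert_self v S⟩, by rw [hdS1]; exact hp1⟩, hnotS⟩
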